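/- arXiv:2011.04410 — 2 statements merged into one kernel-verified Lean document; each statement's English description precedes it below -/
import Mathlib

section
/- For every positive integer k and every positive integer n, the maximal number of 3-term arithmetic progressions in an n-element subset of k-dimensional Euclidean space is ⌈n²/2⌉; that is, μ_n(ℝᵏ) = ⌈n²/2⌉, where ℝᵏ carries the Euclidean metric. -/
/-- `(a,b,c)` is a 3-term arithmetic progression in the metric space `M`:
`d(a,b) = d(b,c) = (1/2)·d(a,c)`. -/
def IsAP3 {M : Type*} [MetricSpace M] (a b c : M) : Prop :=
  dist a b = dist b c ∧ dist b c = dist a c / 2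

/-- The set of 3-term arithmetic progressions with all entries in `A`. -/
def AT {M : Type*} [MetricSpace M] (A : Set M) : Set (M × M × M) :=
  {p | p.1 ∈ A ∧ p.2.1 ∈ A ∧ p.2.2 ∈ A ∧ IsAP3 p.1 p.2.1 p.2.2}

/-!
In a strictly convex space `(a, b, c)` is a 3-term progression iff `b` is the midpoint of `a`
and `c`, so `AT A` is counted by the pairs `(a, c) ∈ A²` whose midpoint lies in `A`. A linear
functional that is injective on `A` preserves midpoints, which reduces the upper bound to the real
line. There, if `b` is the `j`-th smallest of `n` points, at most `2 min(j, n - 1 - j) + 1` pairs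
have midpoint `b`, and these bounds add up to `⌈n²/2⌉`. The progression `0, 1, …, n - 1` on a line
attains the bound: its midpoint pairs are the pairs of indices with even sum.
-/

open Finset

section Midpoint

variable (R : Type*) {V P : Type*} [Ring R] [Invertible (2 : R)] [AddCommGroup V] [Module R V]
  [AddTorsor V P]

def midpointPairs (A : Set P) : Set (P × P) :=
  {p | p.1 ∈ A ∧ p.2 ∈ A ∧ midpoint R p.1 p.2 ∈ A}

variable {R} {A : Set P}

theorem Set.Finite.midpointPairs (hA : A.Finite) : (midpointPairs R A).Finite :=
  (hA.prod hA).subset fun _ hp ↦ ⟨hp.1, hp.2.1⟩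

theorem ncard_midpointPairs_le_of_injOn {V' Q : Type*} [AddCommGroup V'] [Module R V']
    [AddTorsor V' Q] (f : P →ᵃ[R] Q) (hA : A.Finite) (hf : Set.InjOn f A) :
    (midpointPairs R A).ncard ≤ (midpointPairs R (f '' A)).ncard := by
  refine Set.ncard_le_ncard_of_injOn (Prod.map f f) ?_ ?_ (hA.image f).midpointPairs
  · rintro ⟨a, c⟩ ⟨ha, hc, hm⟩
    refine ⟨Set.mem_image_of_mem f ha, Set.mem_image_of_mem f hc, ?_⟩
    rw [Prod.map_fst, Prod.map_snd, ← f.map_midpoint]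
    exact Set.mem_image_of_mem f hm
  · rintro ⟨a, c⟩ ⟨ha, hc, -⟩ ⟨a', c'⟩ ⟨ha', hc', -⟩ h
    simp only [Prod.map, Prod.mk.injEq] at h
    exact Prod.ext (hf ha ha' h.1) (hf hc hc' h.2)

end Midpoint

theorem Module.exists_dual_injOn (K : Type*) {E : Type*} [Field K] [Infinite K] [AddCommGroup E]
    [Module K E] {A : Set E} (hA : A.Finite) : ∃ f : Module.Dual K E, Set.InjOn f A := by
  have : Finite {p : A × A // p.1 ≠ p.2} := by
    have := hA.to_subtype
    infer_instance
  obtain ⟨f, hf⟩ := Module.exists_dual_forall_apply_ne_zero (K := K)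
    (fun p : {p : A × A // p.1 ≠ p.2} ↦ (p.1.1 : E) - p.1.2)
    fun p ↦ sub_ne_zero.mpr fun h ↦ p.2 (Subtype.ext h)
  refine ⟨f, fun x hx y hy hxy ↦ by_contra fun hne ↦ ?_⟩
  exact hf ⟨(⟨x, hx⟩, ⟨y, hy⟩), fun h ↦ hne (congrArg Subtype.val h)⟩ (by simp [hxy])

section StrictConvex

variable {E P : Type*} [NormedAddCommGroup E] [NormedSpace ℝ E] [StrictConvexSpace ℝ E]
  [MetricSpace P] [NormedAddTorsor E P]

theorem isAP3_iff_eq_midpoint {a b c : P} : IsAP3 a b c ↔ b = midpoint ℝ a c := by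
  constructor
  · rintro ⟨hab, hbc⟩
    exact eq_midpoint_of_dist_eq_half (hab.trans hbc) hbc
  · rintro rfl
    simp only [IsAP3, dist_left_midpoint (𝕜 := ℝ), dist_midpoint_right (𝕜 := ℝ), Real.norm_two]
    exact ⟨trivial, inv_mul_eq_div _ _⟩

theorem AT_eq_image_midpointPairs (A : Set P) :
    AT A = (fun p : P × P ↦ (p.1, midpoint ℝ p.1 p.2, p.2)) '' midpointPairs ℝ A := by
  ext ⟨a, b, c⟩
  constructor
  · rintro ⟨ha, hb, hc, hAP⟩
    obtain rfl : b = midpoint ℝ a c := isAP3_iff_eq_midpoint.mp hAP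
    exact ⟨(a, c), ⟨ha, hc, hb⟩, rfl⟩
  · rintro ⟨⟨a, c⟩, ⟨ha, hc, hb⟩, h⟩
    cases h
    exact ⟨ha, hb, hc, isAP3_iff_eq_midpoint.mpr rfl⟩

theorem ncard_AT_eq_ncard_midpointPairs (A : Set P) :
    (AT A).ncard = (midpointPairs ℝ A).ncard := by
  rw [AT_eq_image_midpointPairs]
  refine Set.ncard_image_of_injective _ fun p q h ↦ ?_
  simp only [Prod.mk.injEq] at h
  exact Prod.ext h.1 h.2.2

end StrictConvex

theorem Finset.sum_card_lt_card_gt {α M : Type*} [LinearOrder α] [AddCommMonoid M]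
    (B : Finset α) (g : ℕ → ℕ → M) :
    ∑ b ∈ B, g #{x ∈ B | x < b} #{x ∈ B | b < x} = ∑ i ∈ range #B, g i (#B - 1 - i) := by
  obtain ⟨n, hn⟩ : ∃ n, #B = n := ⟨_, rfl⟩
  -- generalizing `e` keeps `B` out of its type, so that `B` can be rewritten below
  generalize he : B.orderEmbOfFin hn = e
  have hB : univ.map e.toEmbedding = B := he ▸ B.map_orderEmbOfFin_univ hn
  rw [hn, ← hB, sum_map, ← Fin.sum_univ_eq_sum_range (fun i ↦ g i (n - 1 - i))]
  refine sum_congr rfl fun i _ ↦ ?_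
  simp only [filter_map, card_map, Function.comp_def, RelEmbedding.coe_toEmbedding, e.lt_iff_lt,
    filter_gt_eq_Iio, filter_lt_eq_Ioi, Fin.card_Iio, Fin.card_Ioi]

theorem Nat.sum_range_two_mul_min_add_one (n : ℕ) :
    ∑ i ∈ range n, (2 * min i (n - 1 - i) + 1) = (n ^ 2 + 1) / 2 := by
  induction n using Nat.strong_induction_on with
  | _ n ih =>
    match n with
    | 0 => rfl
    | 1 => rfl
    | m + 2 =>
      have hshift : ∀ i ∈ range m,
          2 * min (i + 1) (m + 2 - 1 - (i + 1)) + 1 = 2 * min i (m - 1 - i) + 1 + 2 := by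
        intro i hi
        have := mem_range.mp hi
        omega
      rw [sum_range_succ', sum_range_succ, sum_congr rfl hshift, sum_add_distrib, ih m (by omega)]
      simp only [sum_const, card_range, smul_eq_mul]
      have : (m + 2) ^ 2 = m ^ 2 + 4 * m + 4 := by ring
      omega

theorem Nat.card_filter_even_add_range (n : ℕ) :
    #{p ∈ range n ×ˢ range n | Even (p.1 + p.2)} = (n ^ 2 + 1) / 2 := by
  set E := {i ∈ range n | Even i}
  set O := {i ∈ range n | ¬Even i}
  have hsplit : {p ∈ range n ×ˢ range n | Even (p.1 + p.2)} = E ×ˢ E ∪ O ×ˢ O := by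
    ext ⟨i, j⟩
    simp only [E, O, mem_filter, mem_product, mem_union, Nat.even_add]
    tauto
  have hO : #O = n / 2 := by
    rw [← Nat.card_multiples n 2]
    simp only [O, ← even_iff_two_dvd, Nat.even_add_one]
  have hEO : #E + #O = n := by
    rw [card_filter_add_card_filter_not, card_range]
  rw [hsplit, card_union_of_disjoint, card_product, card_product]
  · obtain ⟨m, rfl | rfl⟩ := Nat.even_or_odd' n
    · rw [show #E = m by omega, show #O = m by omega]
      ring_nf
      omega
    · rw [show #E = m + 1 by omega, show #O = m by omega]
      ring_nf
      omega
  · exact disjoint_product.mpr (Or.inl (disjoint_filter_filter_not _ _ _))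

section LinearOrderedField

variable {𝕜 : Type*} [Field 𝕜] [LinearOrder 𝕜] [IsStrictOrderedRing 𝕜]

/-- A pair with midpoint `b` has one entry on each side of `b`, and either entry determines the
other. -/
theorem card_midpoint_fiber_le (B : Finset 𝕜) (b : 𝕜) :
    #{p ∈ B ×ˢ B | midpoint 𝕜 p.1 p.2 = b} ≤ 2 * min #{x ∈ B | x < b} #{x ∈ B | b < x} + 1 := by
  set F := {p ∈ B ×ˢ B | midpoint 𝕜 p.1 p.2 = b}
  have hF : ∀ p ∈ F, p.1 ∈ B ∧ p.2 ∈ B ∧ p.1 + p.2 = b + b := by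
    intro p hp
    simp only [F, mem_filter, mem_product] at hp
    exact ⟨hp.1.1, hp.1.2, by rw [← hp.2, midpoint_add_self]⟩
  have hsplit : #F ≤ #{p ∈ F | p.1 < b} + #{p ∈ F | b < p.1} + 1 := by
    calc #F ≤ #({p ∈ F | p.1 < b} ∪ {p ∈ F | b < p.1} ∪ {(b, b)}) := by
          refine card_le_card fun p hp ↦ ?_
          obtain ⟨-, -, hsum⟩ := hF p hp
          rcases lt_trichotomy p.1 b with h | h | h
          · simp [hp, h]
          · have : p = (b, b) := Prod.ext h (by linarith)
            simp [this]
          · simp [hp, h]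
      _ ≤ _ := by grw [card_union_le, card_union_le, card_singleton]
  have hfst : Set.InjOn Prod.fst (F : Set (𝕜 × 𝕜)) := fun p hp q hq h ↦
    Prod.ext h (by linarith [(hF p hp).2.2, (hF q hq).2.2])
  have hsnd : Set.InjOn Prod.snd (F : Set (𝕜 × 𝕜)) := fun p hp q hq h ↦
    Prod.ext (by linarith [(hF p hp).2.2, (hF q hq).2.2]) h
  have hlt : ∀ p ∈ {p ∈ F | p.1 < b}, p.1 ∈ {x ∈ B | x < b} ∧ p.2 ∈ {x ∈ B | b < x} := by
    intro p hp
    obtain ⟨hp, hpb⟩ := mem_filter.mp hp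
    obtain ⟨h1, h2, hsum⟩ := hF p hp
    exact ⟨mem_filter.mpr ⟨h1, hpb⟩, mem_filter.mpr ⟨h2, by linarith⟩⟩
  have hgt : ∀ p ∈ {p ∈ F | b < p.1}, p.1 ∈ {x ∈ B | b < x} ∧ p.2 ∈ {x ∈ B | x < b} := by
    intro p hp
    obtain ⟨hp, hpb⟩ := mem_filter.mp hp
    obtain ⟨h1, h2, hsum⟩ := hF p hp
    exact ⟨mem_filter.mpr ⟨h1, hpb⟩, mem_filter.mpr ⟨h2, by linarith⟩⟩
  have hleft : #{p ∈ F | p.1 < b} ≤ min #{x ∈ B | x < b} #{x ∈ B | b < x} :=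
    le_min (card_le_card_of_injOn _ (fun p hp ↦ (hlt p hp).1) (hfst.mono (filter_subset _ _)))
      (card_le_card_of_injOn _ (fun p hp ↦ (hlt p hp).2) (hsnd.mono (filter_subset _ _)))
  have hright : #{p ∈ F | b < p.1} ≤ min #{x ∈ B | x < b} #{x ∈ B | b < x} :=
    le_min (card_le_card_of_injOn _ (fun p hp ↦ (hgt p hp).2) (hsnd.mono (filter_subset _ _)))
      (card_le_card_of_injOn _ (fun p hp ↦ (hgt p hp).1) (hfst.mono (filter_subset _ _)))
  omega

theorem ncard_midpointPairs_le {B : Set 𝕜} (hB : B.Finite) :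
    (midpointPairs 𝕜 B).ncard ≤ (B.ncard ^ 2 + 1) / 2 := by
  obtain ⟨B, rfl⟩ := hB.exists_finset_coe
  have hpairs : midpointPairs 𝕜 (B : Set 𝕜) = ↑{p ∈ B ×ˢ B | midpoint 𝕜 p.1 p.2 ∈ B} := by
    ext p
    simp [midpointPairs, and_assoc]
  set P := {p ∈ B ×ˢ B | midpoint 𝕜 p.1 p.2 ∈ B}
  have hfibers : #P = ∑ b ∈ B, #{p ∈ P | midpoint 𝕜 p.1 p.2 = b} :=
    card_eq_sum_card_fiberwise fun p hp ↦ (mem_filter.mp hp).2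
  rw [hpairs, Set.ncard_coe_finset, Set.ncard_coe_finset, hfibers,
    ← Nat.sum_range_two_mul_min_add_one, ← sum_card_lt_card_gt B fun l r ↦ 2 * min l r + 1]
  refine sum_le_sum fun b _ ↦ (card_le_card ?_).trans (card_midpoint_fiber_le B b)
  intro p
  simp +contextual [P]

theorem le_ncard_midpointPairs_range (n : ℕ) :
    (n ^ 2 + 1) / 2 ≤ (midpointPairs 𝕜 ((↑) '' (range n : Set ℕ) : Set 𝕜)).ncard := by
  rw [← Nat.card_filter_even_add_range, ← Set.ncard_coe_finset]
  refine Set.ncard_le_ncard_of_injOn (Prod.map (↑) (↑)) ?_ ?_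
    ((range n).finite_toSet.image _).midpointPairs
  · rintro ⟨i, j⟩ hij
    simp only [coe_filter, mem_product, mem_range, Set.mem_ofPred_eq] at hij
    obtain ⟨⟨hi, hj⟩, m, hm⟩ := hij
    refine ⟨⟨i, by simpa, rfl⟩, ⟨j, by simpa, rfl⟩, ⟨m, by simpa using (by omega : m < n), ?_⟩⟩
    have hsum : (i : 𝕜) + j = m + m := by exact_mod_cast hm
    have := midpoint_add_self 𝕜 (i : 𝕜) j
    simp only [Prod.map_fst, Prod.map_snd]
    linarith
  · exact (Nat.cast_injective.prodMap Nat.cast_injective).injOn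

end LinearOrderedField

section NormedSpace

variable {E : Type*} [NormedAddCommGroup E] [NormedSpace ℝ E] [StrictConvexSpace ℝ E]

theorem ncard_AT_le {A : Set E} (hA : A.Finite) : (AT A).ncard ≤ (A.ncard ^ 2 + 1) / 2 := by
  obtain ⟨f, hf⟩ := Module.exists_dual_injOn ℝ hA
  calc (AT A).ncard = (midpointPairs ℝ A).ncard := ncard_AT_eq_ncard_midpointPairs A
    _ ≤ (midpointPairs ℝ (f '' A)).ncard := ncard_midpointPairs_le_of_injOn f.toAffineMap hA hf
    _ ≤ ((f '' A).ncard ^ 2 + 1) / 2 := ncard_midpointPairs_le (hA.image f)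
    _ = (A.ncard ^ 2 + 1) / 2 := by rw [hf.ncard_image]

theorem exists_ncard_AT_eq [Nontrivial E] (n : ℕ) :
    ∃ A : Set E, A.Finite ∧ A.ncard = n ∧ (AT A).ncard = (n ^ 2 + 1) / 2 := by
  obtain ⟨e, he⟩ := exists_ne (0 : E)
  set f := LinearMap.toSpanSingleton ℝ E e
  have hf : Function.Injective f := smul_left_injective ℝ he
  set S : Set ℝ := (↑) '' (range n : Set ℕ)
  have hS : S.Finite := (range n).finite_toSet.image _
  have hcard : (f '' S).ncard = n := by
    rw [Set.ncard_image_of_injective _ hf, Set.ncard_image_of_injective _ Nat.cast_injective,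
      Set.ncard_coe_finset, card_range]
  refine ⟨f '' S, hS.image f, hcard, le_antisymm (hcard ▸ ncard_AT_le (hS.image f)) ?_⟩
  calc (n ^ 2 + 1) / 2 ≤ (midpointPairs ℝ S).ncard := le_ncard_midpointPairs_range n
    _ ≤ (midpointPairs ℝ (f '' S)).ncard :=
        ncard_midpointPairs_le_of_injOn f.toAffineMap hS hf.injOn
    _ = (AT (f '' S)).ncard := (ncard_AT_eq_ncard_midpointPairs _).symm

theorem isGreatest_ncard_AT [Nontrivial E] (n : ℕ) :
    IsGreatest {m : ℕ | ∃ A : Set E, A.Finite ∧ A.ncard = n ∧ (AT A).ncard = m}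
      ((n ^ 2 + 1) / 2) :=
  ⟨exists_ncard_AT_eq n, by
    rintro m ⟨A, hA, rfl, rfl⟩
    exact ncard_AT_le hA⟩

end NormedSpace

theorem max_AP3_euclidean_general (k : ℕ) (hk : 0 < k) (n : ℕ) :
    IsGreatest {m : ℕ | ∃ A : Set (EuclideanSpace ℝ (Fin k)),
      A.Finite ∧ A.ncard = n ∧ (AT A).ncard = m} ((n ^ 2 + 1) / 2) := by
  have : Nonempty (Fin k) := ⟨⟨0, hk⟩⟩
  exact isGreatest_ncard_AT n

/-- For every positive `k` and `n`, the maximal number of 3-term arithmetic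
progressions in an `n`-element subset of `k`-dimensional Euclidean space is `⌈n²/2⌉`. -/
theorem max_AP3_euclidean (k : ℕ) (hk : 0 < k) (n : ℕ) (hn : 0 < n) :
    IsGreatest {m : ℕ | ∃ A : Set (EuclideanSpace ℝ (Fin k)),
      A.Finite ∧ A.ncard = n ∧ (AT A).ncard = m} ((n ^ 2 + 1) / 2) :=
  max_AP3_euclidean_general k hk n
end

section
/- For every metric space M, every positive integer n, and every n-element subset A ⊆ M, |AT_M(A)| ≤ 2·⌊(n · ⌊(n−1)/2⌋ · ⌈(n−1)/2⌉)/2⌋ + n. -/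
open Finset

theorem Finset.even_card_of_involutive {α : Type*} {s : Finset α} {f : α → α}
    (hf : Function.Involutive f) (hs : ∀ x ∈ s, f x ∈ s) (hne : ∀ x ∈ s, f x ≠ x) :
    Even #s := by
  classical
  rw [card_eq_sum_card_image (fun x => s(x, f x)) s]
  refine even_sum _ fun e he => ?_
  obtain ⟨x, hx, rfl⟩ := mem_image.1 he
  have hfiber : {y ∈ s | s(y, f y) = s(x, f x)} = {x, f x} := by
    ext y
    simp only [mem_filter, Sym2.eq_iff, mem_insert, mem_singleton]
    constructor
    · rintro ⟨-, ⟨h, -⟩ | ⟨h, -⟩⟩ <;> simp [h]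
    · rintro (rfl | rfl)
      · simp [hx]
      · simp [hs x hx, hf x]
  rw [hfiber, card_pair (hne x hx).symm]
  exact even_two

theorem SimpleGraph.CliqueFree.card_le_of_subset_sym2 {α : Type*} {G : SimpleGraph α}
    (hG : G.CliqueFree 3) {t : Finset α} {E : Finset (Sym2 α)} (hEt : E ⊆ t.sym2)
    (hEG : (E : Set (Sym2 α)) ⊆ G.edgeSet) : #E ≤ #t / 2 * ((#t + 1) / 2) := by
  classical
  set H := G.induce (t : Set α)
  have hH : H.CliqueFree 3 := (cliqueFree_induce_iff (G := G) _ _).2 fun _ _ => hG _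
  have hsub : E ⊆ H.edgeFinset.map (Function.Embedding.subtype (· ∈ (t : Set α))).sym2Map := by
    intro e he
    induction e using Sym2.ind with
    | _ x y =>
      have hxy := mk_mem_sym2_iff.1 (hEt he)
      refine mem_map.2 ⟨s(⟨x, hxy.1⟩, ⟨y, hxy.2⟩), ?_, rfl⟩
      simpa [H] using hEG he
  have hturan (m : ℕ) : (m ^ 2 - (m % 2) ^ 2) * (2 - 1) / (2 * 2) + (m % 2).choose 2
      = m / 2 * ((m + 1) / 2) := by
    obtain ⟨k, rfl | rfl⟩ : ∃ k, m = 2 * k ∨ m = 2 * k + 1 := ⟨m / 2, by omega⟩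
    · rw [show 2 * k % 2 = 0 by omega, show 2 * k / 2 = k by omega,
        show (2 * k + 1) / 2 = k by omega,
        show (2 * k) ^ 2 - 0 ^ 2 = 4 * (k * k) by ring_nf; omega]
      simp
    · rw [show (2 * k + 1) % 2 = 1 by omega, show (2 * k + 1) / 2 = k by omega,
        show (2 * k + 1 + 1) / 2 = k + 1 by omega,
        show (2 * k + 1) ^ 2 - 1 ^ 2 = 4 * (k * (k + 1)) by ring_nf; omega]
      simp
  calc #E ≤ #(H.edgeFinset.map _) := card_le_card hsub
    _ = #H.edgeFinset := card_map _
    _ ≤ _ := hH.card_edgeFinset_le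
    _ = #t / 2 * ((#t + 1) / 2) := by simpa using hturan #t

section

variable {M : Type*} [MetricSpace M] {a b c : M}

theorem IsAP3.reverse (h : IsAP3 a b c) : IsAP3 c b a := by
  obtain ⟨h₁, h₂⟩ := h
  refine ⟨?_, ?_⟩ <;> simp only [dist_comm c, dist_comm b a] <;> linarith

theorem IsAP3.dist_eq_two_mul (h : IsAP3 a b c) : dist a c = 2 * dist a b := by
  linarith [h.1, h.2]

theorem IsAP3.middle_eq_of_eq (h : IsAP3 a b c) (hac : a = c) : b = a := by
  subst hac
  have := h.dist_eq_two_mul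
  rw [dist_self] at this
  exact dist_eq_zero.1 (by rw [dist_comm]; linarith)

theorem IsAP3.ne_of_ne (h : IsAP3 a b c) (hac : a ≠ c) : a ≠ b ∧ b ≠ c := by
  have hpos := dist_pos.2 hac
  exact ⟨dist_pos.1 (by linarith [h.1, h.2]), dist_pos.1 (by linarith [h.2])⟩

theorem IsAP3.eq_of_swap (h : IsAP3 a b c) (h' : IsAP3 a c b) : b = c := by
  have hab : dist a b = 0 := by
    linarith [h.dist_eq_two_mul, h'.dist_eq_two_mul, dist_nonneg (x := a) (y := b)]
  have hac : dist a c = 0 := by linarith [h.dist_eq_two_mul]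
  rw [dist_eq_zero] at hab hac
  rw [← hab, hac]

def apGraph (a : M) : SimpleGraph M := SimpleGraph.fromRel (IsAP3 a)

theorem apGraph_adj_dist (h : (apGraph a).Adj b c) :
    0 < dist a b ∧ (dist a c = 2 * dist a b ∨ dist a b = 2 * dist a c) := by
  obtain ⟨hbc, h | h⟩ := h
  · have hac : a ≠ c := fun hac => hbc (h.middle_eq_of_eq hac ▸ hac)
    exact ⟨dist_pos.2 (h.ne_of_ne hac).1, Or.inl h.dist_eq_two_mul⟩
  · have hab : a ≠ b := fun hab => hbc (hab ▸ (h.middle_eq_of_eq hab).symm)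
    exact ⟨dist_pos.2 hab, Or.inr h.dist_eq_two_mul⟩

theorem apGraph_cliqueFree (a : M) : (apGraph a).CliqueFree 3 := by
  classical
  intro t ht
  obtain ⟨x, y, z, hxy, hxz, hyz, -⟩ := SimpleGraph.is3Clique_iff.1 ht
  obtain ⟨hx, hxy⟩ := apGraph_adj_dist hxy
  obtain ⟨-, hxz⟩ := apGraph_adj_dist hxz
  obtain ⟨-, hyz⟩ := apGraph_adj_dist hyz
  rcases hxy with h₁ | h₁ <;> rcases hxz with h₂ | h₂ <;> rcases hyz with h₃ | h₃ <;> linarith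

open Classical in
noncomputable def apTriples (s : Finset M) : Finset (M × M × M) :=
  {p ∈ s ×ˢ s ×ˢ s | IsAP3 p.1 p.2.1 p.2.2}

theorem mem_apTriples {s : Finset M} {p : M × M × M} :
    p ∈ apTriples s ↔ (p.1 ∈ s ∧ p.2.1 ∈ s ∧ p.2.2 ∈ s) ∧ IsAP3 p.1 p.2.1 p.2.2 := by
  simp [apTriples]

theorem coe_apTriples (s : Finset M) : (apTriples s : Set (M × M × M)) = AT (s : Set M) := by
  ext p
  simp [mem_apTriples, AT, and_assoc]

variable [DecidableEq M] (s : Finset M)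

theorem card_filter_apTriples_eq_le : #{p ∈ apTriples s | p.1 = p.2.2} ≤ #s := by
  have hconst : ∀ p ∈ {p ∈ apTriples s | p.1 = p.2.2}, p = (p.1, p.1, p.1) := by
    rintro ⟨a, b, c⟩ hp
    obtain ⟨hp, hac : a = c⟩ := mem_filter.1 hp
    subst hac
    have hb : b = a := (mem_apTriples.1 hp).2.middle_eq_of_eq rfl
    rw [hb]
  refine card_le_card_of_injOn Prod.fst (fun p hp => (mem_apTriples.1 (mem_filter.1 hp).1).1.1) ?_
  intro p hp q hq hpq
  rw [hconst p hp, hconst q hq, hpq]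

theorem even_card_filter_apTriples_ne : Even #{p ∈ apTriples s | p.1 ≠ p.2.2} := by
  refine even_card_of_involutive (f := fun p => (p.2.2, p.2.1, p.1)) (fun _ => rfl) ?_ ?_
  · intro p hp
    simp only [mem_filter, mem_apTriples] at hp ⊢
    exact ⟨⟨⟨hp.1.1.2.2, hp.1.1.2.1, hp.1.1.1⟩, hp.1.2.reverse⟩, Ne.symm hp.2⟩
  · intro p hp h
    exact (mem_filter.1 hp).2 (congrArg Prod.fst h).symm

theorem card_filter_apTriples_ne_fst_le (a : M) :
    #{p ∈ apTriples s | p.1 ≠ p.2.2 ∧ p.1 = a} ≤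
      #(s.erase a) / 2 * ((#(s.erase a) + 1) / 2) := by
  set F := {p ∈ apTriples s | p.1 ≠ p.2.2 ∧ p.1 = a}
  have hF : ∀ p ∈ F, p.1 = a ∧ p.2.1 ∈ s.erase a ∧ p.2.2 ∈ s.erase a ∧
      IsAP3 a p.2.1 p.2.2 ∧ p.2.1 ≠ p.2.2 := by
    rintro ⟨a', b, c⟩ hp
    simp only [F, mem_filter, mem_apTriples] at hp
    obtain ⟨⟨⟨-, hb, hc⟩, hbc⟩, hac, rfl⟩ := hp
    obtain ⟨hab, hbc'⟩ := hbc.ne_of_ne hac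
    exact ⟨rfl, mem_erase.2 ⟨hab.symm, hb⟩, mem_erase.2 ⟨hac.symm, hc⟩, hbc, hbc'⟩
  have hinj : Set.InjOn (fun p : M × M × M => s(p.2.1, p.2.2)) F := by
    rintro ⟨a₁, b₁, c₁⟩ h₁ ⟨a₂, b₂, c₂⟩ h₂ heq
    obtain ⟨ha₁, -, -, hbc₁, -⟩ := hF _ h₁
    obtain ⟨ha₂, -, -, hbc₂, -⟩ := hF _ h₂
    dsimp only at ha₁ ha₂ hbc₁ hbc₂ heq
    rw [ha₁, ha₂]
    obtain ⟨rfl, rfl⟩ | ⟨rfl, rfl⟩ := Sym2.eq_iff.1 heq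
    · rfl
    · rw [hbc₁.eq_of_swap hbc₂]
  refine (card_image_of_injOn hinj).symm.trans_le
    ((apGraph_cliqueFree a).card_le_of_subset_sym2 ?_ ?_)
  · intro e he
    obtain ⟨p, hp, rfl⟩ := mem_image.1 he
    obtain ⟨-, hb, hc, -⟩ := hF p hp
    exact mk_mem_sym2_iff.2 ⟨hb, hc⟩
  · rw [coe_image, Set.image_subset_iff]
    intro p hp
    obtain ⟨-, -, -, hbc, hne⟩ := hF p hp
    exact ⟨hne, Or.inl hbc⟩

theorem card_filter_apTriples_ne_le :
    #{p ∈ apTriples s | p.1 ≠ p.2.2} ≤ (#s - 1) / 2 * (#s / 2) * #s := by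
  refine card_le_mul_card_image_of_maps_to (f := Prod.fst) ?_ _ fun a ha => ?_
  · intro p hp
    exact (mem_apTriples.1 (mem_filter.1 hp).1).1.1
  · rw [filter_filter]
    refine (card_filter_apTriples_ne_fst_le s a).trans_eq ?_
    rw [card_erase_of_mem ha, Nat.sub_add_cancel (card_pos.2 ⟨a, ha⟩)]

end

theorem AT_general_upper_general {M : Type*} [MetricSpace M] (n : ℕ)
    (A : Set M) (hA : A.Finite) (hcard : A.ncard = n) :
    (AT A).ncard ≤ 2 * ((n * ((n - 1) / 2) * (n / 2)) / 2) + n := by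
  classical
  have hs : #hA.toFinset = n := by rw [← hcard, Set.ncard_eq_toFinset_card A hA]
  rw [← hA.coe_toFinset, ← coe_apTriples, Set.ncard_coe_finset,
    ← card_filter_add_card_filter_not (fun p => p.1 = p.2.2)]
  simp only [← ne_eq]
  have htrivial := card_filter_apTriples_eq_le hA.toFinset
  obtain ⟨k, hk⟩ := even_card_filter_apTriples_ne hA.toFinset
  have hnontrivial := card_filter_apTriples_ne_le hA.toFinset
  rw [hs] at htrivial hnontrivial
  rw [show n * ((n - 1) / 2) * (n / 2) = (n - 1) / 2 * (n / 2) * n by ring]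
  omega

/-- For every metric space `M` and every `n`-element subset `A ⊆ M`,
`|AT_M(A)| ≤ 2⌊(n·⌊(n−1)/2⌋·⌈(n−1)/2⌉)/2⌋ + n`. -/
theorem AT_general_upper {M : Type*} [MetricSpace M] (n : ℕ) (hn : 0 < n)
    (A : Set M) (hA : A.Finite) (hcard : A.ncard = n) :
    (AT A).ncard ≤ 2 * ((n * ((n - 1) / 2) * (n / 2)) / 2) + n :=
  AT_general_upper_general n A hA hcard
end
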